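/- arXiv:2011.02428 — 3 statements merged into one kernel-verified Lean document; each statement's English description precedes it below -/
import Mathlib

section
/- Let N ≥ 1 and M ≥ 0 be integers, let G be a simple (undirected, loopless) graph on the vertex set [N], and let w assign to every edge {u,v} of G an integer weight w(u,v) = w(v,u) with −M ≤ w(u,v) ≤ M. Define, for (i,j,k) ∈ [N]³, T(i,j,k) = (N+1)⁴·(w(i,j)+w(i,k)+w(k,j)) + (N+1)²·i + (N+1)·j + k if {i,j}, {i,k} and {k,j} are all edges of G, and T(i,j,k) = (N+1)⁴·(3M+1) + (N+1)²·i + (N+1)·j + k otherwise. Then G contains a triangle (three pairwise adjacent vertices) if and only if the minimum of T over [N]³ is strictly less than (N+1)⁴·(3M+1). -/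
/-!
The low-order part `(N+1)²·i + (N+1)·j + k` of an entry of `T` is a three-digit numeral in base
`N+1`, so it lies in `[0, (N+1)⁴)` and never carries into the high part. A triangle has weight
at most `3M`, so its entry stays below the sentinel `(N+1)⁴·(3M+1)`; every other entry is at least
the sentinel.
-/

theorem three_digit_lt_pow_four {b i j k : ℤ} (hi : i < b) (hj₀ : 0 ≤ j) (hj : j < b)
    (hk : k < b) : b ^ 2 * i + b * j + k < b ^ 4 := by
  have hb : 1 ≤ b := by omega
  have hi' : b ^ 2 * i ≤ b ^ 2 * (b - 1) := by gcongr; omega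
  have hj' : b * j ≤ b * (b - 1) := by gcongr; omega
  have hb34 : b ^ 3 ≤ b ^ 4 := pow_le_pow_right₀ hb (by norm_num)
  nlinarith

theorem mul_add_lt_mul_add_one {b s m r : ℤ} (hb : 0 ≤ b) (hs : s ≤ m) (hr : r < b) :
    b * s + r < b * (m + 1) := by
  nlinarith

theorem triangle_iff_table_min_below_sentinel_general (N : ℕ) (M : ℤ)
    (G : SimpleGraph ℕ) [DecidableRel G.Adj]
    (hvert : ∀ u v, G.Adj u v → u ∈ Finset.Icc 1 N ∧ v ∈ Finset.Icc 1 N)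
    (w : ℕ → ℕ → ℤ)
    (hbound : ∀ u v, G.Adj u v → -M ≤ w u v ∧ w u v ≤ M)
    (T : ℕ → ℕ → ℕ → ℤ)
    (hT : ∀ i j k, T i j k =
      if G.Adj i j ∧ G.Adj i k ∧ G.Adj k j then
        ((N : ℤ) + 1) ^ 4 * (w i j + w i k + w k j)
          + ((N : ℤ) + 1) ^ 2 * (i : ℤ) + ((N : ℤ) + 1) * (j : ℤ) + (k : ℤ)
      else
        ((N : ℤ) + 1) ^ 4 * (3 * M + 1)
          + ((N : ℤ) + 1) ^ 2 * (i : ℤ) + ((N : ℤ) + 1) * (j : ℤ) + (k : ℤ)) :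
    (∃ i j k, G.Adj i j ∧ G.Adj i k ∧ G.Adj k j) ↔
      (∃ i ∈ Finset.Icc 1 N, ∃ j ∈ Finset.Icc 1 N, ∃ k ∈ Finset.Icc 1 N,
        T i j k < ((N : ℤ) + 1) ^ 4 * (3 * M + 1)) := by
  have digit_lt {x : ℕ} (hx : x ∈ Finset.Icc 1 N) : (x : ℤ) < N + 1 := by
    have := (Finset.mem_Icc.mp hx).2
    omega
  constructor
  · rintro ⟨i, j, k, hij, hik, hkj⟩
    obtain ⟨hi, hj⟩ := hvert i j hij
    obtain ⟨hk, -⟩ := hvert k j hkj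
    refine ⟨i, hi, j, hj, k, hk, ?_⟩
    have hweight : w i j + w i k + w k j ≤ 3 * M := by
      linarith [(hbound i j hij).2, (hbound i k hik).2, (hbound k j hkj).2]
    have hlow := three_digit_lt_pow_four (digit_lt hi) (by positivity) (digit_lt hj) (digit_lt hk)
    rw [hT, if_pos ⟨hij, hik, hkj⟩]
    linarith [mul_add_lt_mul_add_one (by positivity) hweight hlow]
  · rintro ⟨i, -, j, -, k, -, hlt⟩
    refine ⟨i, j, k, ?_⟩
    by_contra hnot
    rw [hT, if_neg hnot] at hlt
    have hlow : 0 ≤ ((N : ℤ) + 1) ^ 2 * (i : ℤ) + ((N : ℤ) + 1) * (j : ℤ) + (k : ℤ) := by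
      positivity
    linarith

/-- Let `G` be a simple graph on the vertex set `[N] = {1,…,N}`
(its adjacent vertices all lie in `[N]`), with symmetric integer edge weights
`w` satisfying `−M ≤ w(u,v) ≤ M` on every edge. With the virtual table
`T(i,j,k) = (N+1)⁴·(w(i,j)+w(i,k)+w(k,j)) + (N+1)²·i + (N+1)·j + k` when
`{i,j}, {i,k}, {k,j}` are all edges of `G`, and
`T(i,j,k) = (N+1)⁴·(3M+1) + (N+1)²·i + (N+1)·j + k` otherwise, the graph `G`
contains a triangle iff the minimum of `T` over `[N]³` is `< (N+1)⁴·(3M+1)`. -/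
theorem triangle_iff_table_min_below_sentinel (N : ℕ) (hN : 1 ≤ N) (M : ℤ) (hM : 0 ≤ M)
    (G : SimpleGraph ℕ) [DecidableRel G.Adj]
    (hvert : ∀ u v, G.Adj u v → u ∈ Finset.Icc 1 N ∧ v ∈ Finset.Icc 1 N)
    (w : ℕ → ℕ → ℤ)
    (hsym : ∀ u v, G.Adj u v → w u v = w v u)
    (hbound : ∀ u v, G.Adj u v → -M ≤ w u v ∧ w u v ≤ M)
    (T : ℕ → ℕ → ℕ → ℤ)
    (hT : ∀ i j k, T i j k =
      if G.Adj i j ∧ G.Adj i k ∧ G.Adj k j then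
        ((N : ℤ) + 1) ^ 4 * (w i j + w i k + w k j)
          + ((N : ℤ) + 1) ^ 2 * (i : ℤ) + ((N : ℤ) + 1) * (j : ℤ) + (k : ℤ)
      else
        ((N : ℤ) + 1) ^ 4 * (3 * M + 1)
          + ((N : ℤ) + 1) ^ 2 * (i : ℤ) + ((N : ℤ) + 1) * (j : ℤ) + (k : ℤ)) :
    (∃ i j k, G.Adj i j ∧ G.Adj i k ∧ G.Adj k j) ↔
      (∃ i ∈ Finset.Icc 1 N, ∃ j ∈ Finset.Icc 1 N, ∃ k ∈ Finset.Icc 1 N,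
        T i j k < ((N : ℤ) + 1) ^ 4 * (3 * M + 1)) :=
  triangle_iff_table_min_below_sentinel_general N M G hvert w hbound T hT
end

section
/- Let N ≥ 1 and M ≥ 0 be integers, let G be a simple (undirected, loopless) graph on the vertex set [N], and let w assign to every edge {u,v} of G an integer weight w(u,v) = w(v,u) with −M ≤ w(u,v) ≤ M. Define, for (i,j,k) ∈ [N]³, T(i,j,k) = (N+1)⁴·(w(i,j)+w(i,k)+w(k,j)) + (N+1)²·i + (N+1)·j + k if {i,j}, {i,k} and {k,j} are all edges of G, and T(i,j,k) = (N+1)⁴·(3M+1) + (N+1)²·i + (N+1)·j + k otherwise. If (i',j',k') minimizes T over [N]³ and T(i',j',k') < (N+1)⁴·(3M+1), then i', j', k' are pairwise adjacent in G (so they form a triangle) and the weight w(i',j')+w(i',k')+w(k',j') of this triangle is minimum among the weights of all triangles of G. -/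
/-!
The low-order term `(N+1)²·i + (N+1)·j + k` is the base-`(N+1)` code of the index triple, so for
indices in `[N]` it lies in `[0, (N+1)³)` and cannot overturn a comparison of the high parts,
which are multiples of `(N+1)⁴`. Hence `T` is minimized lexicographically: first by the high part
(a triangle weight, or the sentinel `3M+1` for non-triangles), then by the index triple.
-/

def indexCode (N i j k : ℕ) : ℤ := ((N : ℤ) + 1) ^ 2 * i + ((N : ℤ) + 1) * j + k

lemma indexCode_nonneg (N i j k : ℕ) : 0 ≤ indexCode N i j k := by
  unfold indexCode; positivity

lemma indexCode_lt_pow_four {N i j k : ℕ} (hi : i ≤ N) (hj : j ≤ N) (hk : k ≤ N) :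
    indexCode N i j k < ((N : ℤ) + 1) ^ 4 := by
  have hB : (1 : ℤ) ≤ (N : ℤ) + 1 := by omega
  calc indexCode N i j k
      ≤ ((N : ℤ) + 1) ^ 2 * N + ((N : ℤ) + 1) * N + N := by unfold indexCode; gcongr
    _ < ((N : ℤ) + 1) ^ 3 := by ring_nf; omega
    _ ≤ ((N : ℤ) + 1) ^ 4 := pow_le_pow_right₀ hB (by norm_num)

lemma le_of_mul_add_le_mul_add {q a b r s : ℤ} (hq : 0 ≤ q) (hr : 0 ≤ r) (hs : s < q)
    (h : q * a + r ≤ q * b + s) : a ≤ b := by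
  have : q * a < q * (b + 1) := by linarith
  exact Int.lt_add_one_iff.mp (lt_of_mul_lt_mul_left this hq)

theorem table_minimizer_gives_min_weight_triangle_general (N : ℕ) (M : ℤ)
    (G : SimpleGraph ℕ) [DecidableRel G.Adj]
    (hvert : ∀ u v, G.Adj u v → u ∈ Finset.Icc 1 N ∧ v ∈ Finset.Icc 1 N)
    (w : ℕ → ℕ → ℤ)
    (T : ℕ → ℕ → ℕ → ℤ)
    (hT : ∀ i j k, T i j k =
      if G.Adj i j ∧ G.Adj i k ∧ G.Adj k j then
        ((N : ℤ) + 1) ^ 4 * (w i j + w i k + w k j)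
          + ((N : ℤ) + 1) ^ 2 * (i : ℤ) + ((N : ℤ) + 1) * (j : ℤ) + (k : ℤ)
      else
        ((N : ℤ) + 1) ^ 4 * (3 * M + 1)
          + ((N : ℤ) + 1) ^ 2 * (i : ℤ) + ((N : ℤ) + 1) * (j : ℤ) + (k : ℤ))
    (i' j' k' : ℕ)
    (hmin : ∀ i ∈ Finset.Icc 1 N, ∀ j ∈ Finset.Icc 1 N, ∀ k ∈ Finset.Icc 1 N,
      T i' j' k' ≤ T i j k)
    (hbelow : T i' j' k' < ((N : ℤ) + 1) ^ 4 * (3 * M + 1)) :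
    (G.Adj i' j' ∧ G.Adj i' k' ∧ G.Adj k' j') ∧
      (∀ i j k, G.Adj i j → G.Adj i k → G.Adj k j →
        w i' j' + w i' k' + w k' j' ≤ w i j + w i k + w k j) := by
  have hT' : ∀ i j k, T i j k = ((N : ℤ) + 1) ^ 4 *
      (if G.Adj i j ∧ G.Adj i k ∧ G.Adj k j then w i j + w i k + w k j else 3 * M + 1)
        + indexCode N i j k := by
    intro i j k
    rw [hT, indexCode]
    split_ifs <;> ring
  have htri : G.Adj i' j' ∧ G.Adj i' k' ∧ G.Adj k' j' := by
    by_contra hnot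
    rw [hT', if_neg hnot] at hbelow
    linarith [indexCode_nonneg N i' j' k']
  refine ⟨htri, fun i j k hij hik hkj => ?_⟩
  obtain ⟨hi, hj⟩ := hvert i j hij
  have hk := (hvert i k hik).2
  have hle := hmin i hi j hj k hk
  rw [hT', hT', if_pos htri, if_pos ⟨hij, hik, hkj⟩] at hle
  exact le_of_mul_add_le_mul_add (by positivity) (indexCode_nonneg N i' j' k')
    (indexCode_lt_pow_four (Finset.mem_Icc.mp hi).2 (Finset.mem_Icc.mp hj).2
      (Finset.mem_Icc.mp hk).2) hle

/-- correctness of Algorithm Q: with the setup of the minimum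
weight triangle virtual table, if `(i',j',k') ∈ [N]³` minimizes `T` over `[N]³`
and `T(i',j',k') < (N+1)⁴·(3M+1)`, then `i', j', k'` are pairwise adjacent in
`G` (they form a triangle) and the weight `w(i',j')+w(i',k')+w(k',j')` of this
triangle is minimum among the weights of all triangles of `G`. -/
theorem table_minimizer_gives_min_weight_triangle (N : ℕ) (hN : 1 ≤ N) (M : ℤ) (hM : 0 ≤ M)
    (G : SimpleGraph ℕ) [DecidableRel G.Adj]
    (hvert : ∀ u v, G.Adj u v → u ∈ Finset.Icc 1 N ∧ v ∈ Finset.Icc 1 N)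
    (w : ℕ → ℕ → ℤ)
    (hsym : ∀ u v, G.Adj u v → w u v = w v u)
    (hbound : ∀ u v, G.Adj u v → -M ≤ w u v ∧ w u v ≤ M)
    (T : ℕ → ℕ → ℕ → ℤ)
    (hT : ∀ i j k, T i j k =
      if G.Adj i j ∧ G.Adj i k ∧ G.Adj k j then
        ((N : ℤ) + 1) ^ 4 * (w i j + w i k + w k j)
          + ((N : ℤ) + 1) ^ 2 * (i : ℤ) + ((N : ℤ) + 1) * (j : ℤ) + (k : ℤ)
      else
        ((N : ℤ) + 1) ^ 4 * (3 * M + 1)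
          + ((N : ℤ) + 1) ^ 2 * (i : ℤ) + ((N : ℤ) + 1) * (j : ℤ) + (k : ℤ))
    (i' j' k' : ℕ)
    (hi' : i' ∈ Finset.Icc 1 N) (hj' : j' ∈ Finset.Icc 1 N) (hk' : k' ∈ Finset.Icc 1 N)
    (hmin : ∀ i ∈ Finset.Icc 1 N, ∀ j ∈ Finset.Icc 1 N, ∀ k ∈ Finset.Icc 1 N,
      T i' j' k' ≤ T i j k)
    (hbelow : T i' j' k' < ((N : ℤ) + 1) ^ 4 * (3 * M + 1)) :
    (G.Adj i' j' ∧ G.Adj i' k' ∧ G.Adj k' j') ∧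
      (∀ i j k, G.Adj i j → G.Adj i k → G.Adj k j →
        w i' j' + w i' k' + w k' j' ≤ w i j + w i k + w k j) :=
  table_minimizer_gives_min_weight_triangle_general N M G hvert w T hT i' j' k' hmin hbelow
end

section
/- Let N be a positive integer and let K : [N]² → ℤ be a matrix of integers. Define, for (i,j) ∈ [N]², V(i,j) = −(N+1)⁴·(K(i,j)−K(j,i))² + (N+1)²·i + (N+1)·j. Then the minimum of V over [N]² is positive if and only if K is symmetric, i.e., K(i,j) = K(j,i) for all i, j ∈ [N]; equivalently, the minimum of V is negative if and only if K(i,j) ≠ K(j,i) for some i, j ∈ [N]. -/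
/-!
The low-order part `(N+1)²·i + (N+1)·j` is a two-digit base-`(N+1)` numeral, hence lies strictly
between `0` and `(N+1)³ ≤ (N+1)⁴`. So any nonzero asymmetry, whose square is at least `1`, makes
the high part `−(N+1)⁴·(K i j − K j i)²` dominate and the entry negative, while a zero asymmetry
leaves only the positive low-order part.
-/

theorem sq_mul_add_mul_lt_pow_three {b i j : ℤ} (hi : i < b) (hj₀ : 0 ≤ j) (hj : j < b) :
    b ^ 2 * i + b * j < b ^ 3 := by
  nlinarith

theorem lt_mul_sq_of_ne_zero {M c d : ℤ} (hc : 0 ≤ c) (hcM : c < M) (hd : d ≠ 0) :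
    c < M * d ^ 2 := by
  have : 0 < d ^ 2 := by positivity
  nlinarith

theorem neg_mul_sq_add_pos_iff {M c d : ℤ} (hc : 0 < c) (hcM : c < M) :
    0 < -M * d ^ 2 + c ↔ d = 0 := by
  refine ⟨fun h => ?_, fun hd => by simpa [hd] using hc⟩
  by_contra hd
  linarith [lt_mul_sq_of_ne_zero hc.le hcM hd]

theorem neg_mul_sq_add_neg_iff {M c d : ℤ} (hc : 0 < c) (hcM : c < M) :
    -M * d ^ 2 + c < 0 ↔ d ≠ 0 := by
  refine ⟨?_, fun hd => by linarith [lt_mul_sq_of_ne_zero hc.le hcM hd]⟩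
  rintro h rfl
  exact hc.not_gt (by simpa using h)

theorem low_part_pos_and_lt {N i j : ℕ} (hi : i ∈ Finset.Icc 1 N) (hj : j ∈ Finset.Icc 1 N) :
    0 < ((N : ℤ) + 1) ^ 2 * (i : ℤ) + ((N : ℤ) + 1) * (j : ℤ) ∧
      ((N : ℤ) + 1) ^ 2 * (i : ℤ) + ((N : ℤ) + 1) * (j : ℤ) < ((N : ℤ) + 1) ^ 4 := by
  rw [Finset.mem_Icc] at hi hj
  have hi' : (1 : ℤ) ≤ i ∧ (i : ℤ) ≤ N := by exact_mod_cast hi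
  have hj' : (1 : ℤ) ≤ j ∧ (j : ℤ) ≤ N := by exact_mod_cast hj
  refine ⟨add_pos (mul_pos (by positivity) (by omega)) (mul_pos (by omega) (by omega)), ?_⟩
  calc _ < ((N : ℤ) + 1) ^ 3 := sq_mul_add_mul_lt_pow_three (by omega) (by omega) (by omega)
    _ ≤ ((N : ℤ) + 1) ^ 4 := pow_le_pow_right₀ (by omega) (by norm_num)

theorem symmetry_iff_table_min_pos_general (N : ℕ)
    (K : ℕ → ℕ → ℤ)
    (V : ℕ → ℕ → ℤ)
    (hV : ∀ i j, V i j =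
      -(((N : ℤ) + 1) ^ 4) * (K i j - K j i) ^ 2
        + ((N : ℤ) + 1) ^ 2 * (i : ℤ) + ((N : ℤ) + 1) * (j : ℤ)) :
    ((∀ i ∈ Finset.Icc 1 N, ∀ j ∈ Finset.Icc 1 N, 0 < V i j) ↔
        (∀ i ∈ Finset.Icc 1 N, ∀ j ∈ Finset.Icc 1 N, K i j = K j i)) ∧
      ((∃ i ∈ Finset.Icc 1 N, ∃ j ∈ Finset.Icc 1 N, V i j < 0) ↔
        (∃ i ∈ Finset.Icc 1 N, ∃ j ∈ Finset.Icc 1 N, K i j ≠ K j i)) := by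
  have entry_pos : ∀ i ∈ Finset.Icc 1 N, ∀ j ∈ Finset.Icc 1 N, 0 < V i j ↔ K i j = K j i := by
    intro i hi j hj
    obtain ⟨hlow_pos, hlow_lt⟩ := low_part_pos_and_lt hi hj
    rw [hV, add_assoc, neg_mul_sq_add_pos_iff hlow_pos hlow_lt, sub_eq_zero]
  have entry_neg : ∀ i ∈ Finset.Icc 1 N, ∀ j ∈ Finset.Icc 1 N, V i j < 0 ↔ K i j ≠ K j i := by
    intro i hi j hj
    obtain ⟨hlow_pos, hlow_lt⟩ := low_part_pos_and_lt hi hj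
    rw [hV, add_assoc, neg_mul_sq_add_neg_iff hlow_pos hlow_lt, sub_ne_zero]
  exact ⟨forall₂_congr fun i hi => forall₂_congr (entry_pos i hi),
    exists_congr fun i => and_congr_right fun hi =>
      exists_congr fun j => and_congr_right (entry_neg i hi j)⟩

/-- For an `N×N` integer matrix `K` and the virtual table
`V(i,j) = −(N+1)⁴·(K(i,j)−K(j,i))² + (N+1)²·i + (N+1)·j`, the minimum of `V`
over `[N]²` is positive (i.e., every value of `V` on `[N]²` is positive) iff
`K` is symmetric on `[N]²`; equivalently, the minimum of `V` is negative
(i.e., some value is negative) iff `K(i,j) ≠ K(j,i)` for some `i, j ∈ [N]`. -/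
theorem symmetry_iff_table_min_pos (N : ℕ) (hN : 0 < N)
    (K : ℕ → ℕ → ℤ)
    (V : ℕ → ℕ → ℤ)
    (hV : ∀ i j, V i j =
      -(((N : ℤ) + 1) ^ 4) * (K i j - K j i) ^ 2
        + ((N : ℤ) + 1) ^ 2 * (i : ℤ) + ((N : ℤ) + 1) * (j : ℤ)) :
    ((∀ i ∈ Finset.Icc 1 N, ∀ j ∈ Finset.Icc 1 N, 0 < V i j) ↔
        (∀ i ∈ Finset.Icc 1 N, ∀ j ∈ Finset.Icc 1 N, K i j = K j i)) ∧
      ((∃ i ∈ Finset.Icc 1 N, ∃ j ∈ Finset.Icc 1 N, V i j < 0) ↔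
        (∃ i ∈ Finset.Icc 1 N, ∃ j ∈ Finset.Icc 1 N, K i j ≠ K j i)) :=
  symmetry_iff_table_min_pos_general N K V hV
end
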